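/- arXiv:1202.0321 — 2 statements merged into one kernel-verified Lean document; each statement's English description precedes it below -/
import Mathlib

section
/- Let (A, Φ, φ) be a C*-dynamical system with GNS representation (H_φ, π_φ, Ω_φ), and let Φ₀ : A → B(H_φ) be given by Φ₀(a) = π_φ(Φ(a)) with Stinespring representation (V₀, σ₁, L₁). Then there exists a linear isometry Λ₀ : H_φ → L₁ with Λ₀ π_φ(a)Ω_φ = a ⊗_{Φ₀} Ω_φ for all a ∈ A, satisfying σ₁(a)Λ₀ = Λ₀π_φ(a) for all a ∈ A, and the GNS contraction factorizes as U_{Φ,φ} = V₀* Λ₀. -/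
/-!
By Φ-invariance of the vector state of `Ω` and the Stinespring relation `π ∘ Φ = V₀* σ₁(·) V₀`,
`‖σ₁(a) V₀ Ω‖² = ⟪Ω, π(Φ(a⋆a)) Ω⟫ = ⟪Ω, π(a⋆a) Ω⟫ = ‖π(a) Ω‖²`. Hence `π(a) Ω ↦ σ₁(a) V₀ Ω` is
a well-defined isometry on the dense subspace `π(A) Ω`, which extends to `Λ₀ : H → L₁`. The
intertwining relation and `U = V₀* Λ₀` only need to be checked on the vectors `π(a) Ω`, where they
follow from multiplicativity of `π`, `σ₁` and from the Stinespring relation.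
-/

open ContinuousLinearMap
open scoped ComplexOrder

/-- Complete positivity of a linear map between star-ordered `ℂ`-algebras. -/
def IsCompletelyPositive {A B : Type*} [Ring A] [StarRing A] [Algebra ℂ A]
    [Ring B] [StarRing B] [PartialOrder B] [Algebra ℂ B]
    (Φ : A →ₗ[ℂ] B) : Prop :=
  ∀ (n : ℕ) (a : Fin n → A) (c : Fin n → B),
    0 ≤ ∑ i : Fin n, ∑ j : Fin n, star (c i) * Φ (star (a i) * a j) * c j

namespace LinearMap

variable {𝕜 E Eₗ F : Type*} [NontriviallyNormedField 𝕜] [AddCommGroup E] [Module 𝕜 E]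
  [NormedAddCommGroup Eₗ] [NormedSpace 𝕜 Eₗ] [NormedAddCommGroup F] [NormedSpace 𝕜 F]
  [CompleteSpace F] {f : E →ₗ[𝕜] F} {e : E →ₗ[𝕜] Eₗ}

theorem norm_extendOfNorm_apply (h_dense : DenseRange e) (h_norm : ∀ x, ‖f x‖ = ‖e x‖)
    (y : Eₗ) : ‖f.extendOfNorm e y‖ = ‖y‖ := by
  have h_bound : ∃ C, ∀ x, ‖f x‖ ≤ C * ‖e x‖ := ⟨1, fun x => by rw [h_norm, one_mul]⟩
  refine h_dense.induction_on y (isClosed_eq (by fun_prop) continuous_norm) fun x => ?_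
  rw [extendOfNorm_eq h_dense h_bound, h_norm]

end LinearMap

section Representations

variable {𝕜 A E F Fπ Fσ : Type*} [RCLike 𝕜] [Mul A]
  [NormedAddCommGroup E] [InnerProductSpace 𝕜 E] [NormedAddCommGroup F] [InnerProductSpace 𝕜 F]
  [FunLike Fπ A (E →L[𝕜] E)] [MulHomClass Fπ A (E →L[𝕜] E)]
  [FunLike Fσ A (F →L[𝕜] F)] [MulHomClass Fσ A (F →L[𝕜] F)]

theorem comp_eq_comp_of_apply_cyclic {π : Fπ} {σ : Fσ} {Λ : E →L[𝕜] F} {ξ : E} {η : F}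
    (hξ : DenseRange fun a => π a ξ) (hΛ : ∀ b, Λ (π b ξ) = σ b η) (a : A) :
    σ a ∘L Λ = Λ ∘L π a :=
  DFunLike.coe_injective <| hξ.equalizer (by fun_prop) (by fun_prop) <| funext fun b => by
    simp only [Function.comp_apply, comp_apply, ← mul_apply_eq_comp, ← map_mul, hΛ]

end Representations

theorem inner_map_apply_map_apply {A E F : Type*} [Mul A] [Star A]
    [NormedAddCommGroup E] [InnerProductSpace ℂ E] [CompleteSpace E]
    [FunLike F A (E →L[ℂ] E)] [MulHomClass F A (E →L[ℂ] E)] [StarHomClass F A (E →L[ℂ] E)]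
    (ρ : F) (a b : A) (x y : E) :
    inner ℂ (ρ a x) (ρ b y) = inner ℂ x (ρ (star a * b) y) := by
  rw [map_mul, map_star, star_eq_adjoint, mul_apply_eq_comp, adjoint_inner_right]

theorem norm_apply_stinespring_vector_eq {A H L : Type*} [Ring A] [StarRing A] [Algebra ℂ A]
    [NormedAddCommGroup H] [InnerProductSpace ℂ H] [CompleteSpace H]
    [NormedAddCommGroup L] [InnerProductSpace ℂ L] [CompleteSpace L]
    {Φ : A → A} {π : A →⋆ₐ[ℂ] (H →L[ℂ] H)} {Ω : H} {σ : A →⋆ₐ[ℂ] (L →L[ℂ] L)} {V : H →L[ℂ] L}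
    (hinv : ∀ c, inner ℂ Ω (π (Φ c) Ω) = inner ℂ Ω (π c Ω))
    (hSt : ∀ c, π (Φ c) = adjoint V ∘L (σ c ∘L V)) (a : A) :
    ‖σ a (V Ω)‖ = ‖π a Ω‖ := by
  have h_inner : inner ℂ (σ a (V Ω)) (σ a (V Ω)) = inner ℂ (π a Ω) (π a Ω) := by
    calc inner ℂ (σ a (V Ω)) (σ a (V Ω))
        = inner ℂ Ω (adjoint V (σ (star a * a) (V Ω))) := by
          rw [inner_map_apply_map_apply, adjoint_inner_right]
      _ = inner ℂ Ω (π (Φ (star a * a)) Ω) := by rw [hSt]; rfl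
      _ = inner ℂ (π a Ω) (π a Ω) := by rw [hinv, inner_map_apply_map_apply]
  rw [norm_eq_sqrt_re_inner (𝕜 := ℂ), norm_eq_sqrt_re_inner (𝕜 := ℂ), h_inner]

theorem statement9_general {A H L1 : Type*} [NormedRing A] [StarRing A] [NormedAlgebra ℂ A]
    [NormedAddCommGroup H] [InnerProductSpace ℂ H] [CompleteSpace H]
    [NormedAddCommGroup L1] [InnerProductSpace ℂ L1] [CompleteSpace L1]
    (φ : A →ₗ[ℂ] ℂ) (Φ : A →ₗ[ℂ] A) (hinv : ∀ a, φ (Φ a) = φ a)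
    (π : A →⋆ₐ[ℂ] (H →L[ℂ] H)) (Ω : H)
    (hGNS : ∀ a, φ a = (inner ℂ Ω (π a Ω) : ℂ))
    (hcyc : (Submodule.span ℂ (Set.range fun a : A => π a Ω)).topologicalClosure = ⊤)
    (σ1 : A →⋆ₐ[ℂ] (L1 →L[ℂ] L1)) (V0 : H →L[ℂ] L1)
    (hSt : ∀ a, π (Φ a) = adjoint V0 ∘L (σ1 a ∘L V0))
    (U : H →L[ℂ] H) (hU : ∀ a : A, U (π a Ω) = π (Φ a) Ω) :
    ∃ Λ : H →L[ℂ] L1, (∀ h, ‖Λ h‖ = ‖h‖) ∧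
      (∀ a : A, Λ (π a Ω) = σ1 a (V0 Ω)) ∧
      (∀ a : A, σ1 a ∘L Λ = Λ ∘L π a) ∧
      U = adjoint V0 ∘L Λ := by
  let g : A →ₗ[ℂ] H := (ContinuousLinearMap.apply ℂ H Ω).toLinearMap ∘ₗ π.toLinearMap
  let f : A →ₗ[ℂ] L1 := (ContinuousLinearMap.apply ℂ L1 (V0 Ω)).toLinearMap ∘ₗ σ1.toLinearMap
  have h_dense : DenseRange g := by
    rw [DenseRange, ← LinearMap.coe_range, ← Submodule.span_eq (LinearMap.range g),
      LinearMap.coe_range]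
    exact Submodule.dense_iff_topologicalClosure_eq_top.mpr hcyc
  have h_norm : ∀ a, ‖f a‖ = ‖g a‖ :=
    norm_apply_stinespring_vector_eq (fun c => by rw [← hGNS, ← hGNS, hinv]) hSt
  have hΛ : ∀ a, f.extendOfNorm g (π a Ω) = σ1 a (V0 Ω) :=
    LinearMap.extendOfNorm_eq h_dense ⟨1, fun a => (h_norm a).trans_le (one_mul _).ge⟩
  refine ⟨f.extendOfNorm g, LinearMap.norm_extendOfNorm_apply h_dense h_norm, hΛ,
    comp_eq_comp_of_apply_cyclic h_dense hΛ, ?_⟩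
  refine DFunLike.coe_injective <|
    h_dense.equalizer (by fun_prop) (by fun_prop) <| funext fun a => ?_
  change U (π a Ω) = adjoint V0 (f.extendOfNorm g (π a Ω))
  rw [hU, hSt, hΛ]
  rfl

/-- let `(A, Φ, φ)` be a C*-dynamical system with GNS triple `(H, π, Ω)` and
let `(V₀, σ₁, L₁)` be the Stinespring representation of `Φ₀ = π ∘ Φ` (so that
`a ⊗_{Φ₀} Ω = σ₁(a) V₀ Ω`). Then there is a linear isometry `Λ₀ : H → L₁` with
`Λ₀ π(a)Ω = a ⊗_{Φ₀} Ω`, `σ₁(a)Λ₀ = Λ₀ π(a)` for all `a`, and the GNS contraction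
`U_{Φ,φ}` factorizes as `U_{Φ,φ} = V₀* Λ₀`. -/
theorem statement9 {A H L1 : Type*} [NormedRing A] [StarRing A] [CStarRing A]
    [PartialOrder A] [StarOrderedRing A] [NormedAlgebra ℂ A] [StarModule ℂ A]
    [CompleteSpace A]
    [NormedAddCommGroup H] [InnerProductSpace ℂ H] [CompleteSpace H]
    [NormedAddCommGroup L1] [InnerProductSpace ℂ L1] [CompleteSpace L1]
    (φ : A →ₗ[ℂ] ℂ) (hφ1 : φ 1 = 1) (hφpos : ∀ a : A, 0 ≤ φ (star a * a))
    (Φ : A →ₗ[ℂ] A) (hΦ1 : Φ 1 = 1) (hΦcp : IsCompletelyPositive Φ)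
    (hinv : ∀ a, φ (Φ a) = φ a)
    (π : A →⋆ₐ[ℂ] (H →L[ℂ] H)) (Ω : H)
    (hGNS : ∀ a, φ a = (inner ℂ Ω (π a Ω) : ℂ))
    (hcyc : (Submodule.span ℂ (Set.range fun a : A => π a Ω)).topologicalClosure = ⊤)
    (σ1 : A →⋆ₐ[ℂ] (L1 →L[ℂ] L1)) (V0 : H →L[ℂ] L1) (hV0 : ∀ h, ‖V0 h‖ = ‖h‖)
    (hSt : ∀ a, π (Φ a) = adjoint V0 ∘L (σ1 a ∘L V0))
    (U : H →L[ℂ] H) (hUnorm : ‖U‖ ≤ 1) (hU : ∀ a : A, U (π a Ω) = π (Φ a) Ω) :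
    ∃ Λ : H →L[ℂ] L1, (∀ h, ‖Λ h‖ = ‖h‖) ∧
      (∀ a : A, Λ (π a Ω) = σ1 a (V0 Ω)) ∧
      (∀ a : A, σ1 a ∘L Λ = Λ ∘L π a) ∧
      U = adjoint V0 ∘L Λ :=
  statement9_general φ Φ hinv π Ω hGNS hcyc σ1 V0 hSt U hU
end

section
/- Let (A, Φ, φ) be a C*-dynamical system with φ a faithful state, and Ψ : A → A a unital completely positive map with Φ(Ψ(a)) = a for all a ∈ A. Then Ψ is a *-homomorphism: Ψ(ab) = Ψ(a)Ψ(b) and Ψ(a*) = Ψ(a)* for all a, b ∈ A. -/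
open scoped ComplexOrder

/-!
For `a : A` put `x = Ψ (a⋆ a) - (Ψ a)⋆ Ψ a`. Kadison–Schwarz for `Ψ` gives `0 ≤ x`, and
Kadison–Schwarz for `Φ` at `Ψ a`, together with `Φ ∘ Ψ = id`, gives `Φ x ≤ 0`. Hence `Φ x = 0`,
so `φ x = φ (Φ x) = 0` and faithfulness forces `x = 0`. A star-preserving linear map with
`Ψ (a⋆ a) = (Ψ a)⋆ Ψ a` for all `a` is multiplicative, by polarization of the sesquilinear
map `(a, b) ↦ Ψ (a⋆ b) - (Ψ a)⋆ Ψ b`.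
-/

open scoped ComplexStarModule

section Polarization

variable {M N : Type*} [AddCommGroup M] [Module ℂ M] [AddCommGroup N] [Module ℂ N]

theorem LinearMap.eq_zero_of_forall_apply_self_eq_zero (D : M →ₗ⋆[ℂ] M →ₗ[ℂ] N)
    (h : ∀ x, D x x = 0) : D = 0 := by
  ext x y
  have hsum : D x y + D y x = 0 := by
    simpa [h x, h y, add_comm] using h (x + y)
  have hdiff : Complex.I • (D x y - D y x) = 0 := by
    have := h (x + Complex.I • y)
    simp only [map_add, map_smulₛₗ, LinearMap.add_apply, LinearMap.smul_apply, h x, h y,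
      Complex.conj_I, RingHom.id_apply] at this
    rw [smul_sub, ← this]
    module
  have heq : D x y = D y x :=
    sub_eq_zero.mp ((smul_eq_zero.mp hdiff).resolve_left Complex.I_ne_zero)
  rw [LinearMap.zero_apply, LinearMap.zero_apply]
  simpa [heq, ← two_smul ℂ] using hsum

end Polarization

namespace IsCompletelyPositive

variable {A B : Type*} [Ring A] [StarRing A] [Algebra ℂ A]
  [Ring B] [StarRing B] [PartialOrder B] [Algebra ℂ B] {Θ : A →ₗ[ℂ] B}

theorem map_star_mul_self_nonneg (hΘ : IsCompletelyPositive Θ) (a : A) :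
    0 ≤ Θ (star a * a) := by
  simpa using hΘ 1 ![a] ![1]

variable [PartialOrder A] [StarOrderedRing A] [StarOrderedRing B]

theorem map_nonneg (hΘ : IsCompletelyPositive Θ) {p : A} (hp : 0 ≤ p) : 0 ≤ Θ p := by
  rw [StarOrderedRing.nonneg_iff] at hp
  induction hp using AddSubmonoid.closure_induction with
  | mem _ hx =>
    obtain ⟨s, rfl⟩ := hx
    exact hΘ.map_star_mul_self_nonneg s
  | zero => simp
  | add _ _ _ _ hx hy => rw [map_add]; exact add_nonneg hx hy

variable [StarModule ℂ A] [SelfAdjointDecompose A] [StarModule ℂ B]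

theorem map_star (hΘ : IsCompletelyPositive Θ) (a : A) : Θ (star a) = star (Θ a) := by
  let Θpos : A →ₚ[ℂ] B := .mk₀ Θ fun _ ↦ hΘ.map_nonneg
  have hre : IsSelfAdjoint (Θ (ℜ a)) := (ℜ a).2.map' Θpos
  have him : IsSelfAdjoint (Θ (ℑ a)) := (ℑ a).2.map' Θpos
  conv_lhs => rw [← realPart_add_I_smul_imaginaryPart a]
  conv_rhs => rw [← realPart_add_I_smul_imaginaryPart a]
  simp only [star_add, star_smul, selfAdjoint.star_val_eq, map_add, map_smul, hre.star_eq,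
    him.star_eq]

theorem star_map_mul_map_le (hΘ : IsCompletelyPositive Θ) (hΘ1 : Θ 1 = 1) (a : A) :
    star (Θ a) * Θ a ≤ Θ (star a * a) := by
  -- with these vectors the sum is `Θ (a⋆ a) - (Θ a)⋆ Θ a`, up to cancelling terms
  have h := hΘ 2 ![1, a] ![-Θ a, 1]
  simp only [Fin.sum_univ_two, Matrix.cons_val_zero, Matrix.cons_val_one, star_one, star_neg,
    one_mul, mul_one, hΘ1, neg_mul, mul_neg, neg_neg, hΘ.map_star] at h
  rw [← sub_nonneg]
  convert h using 1
  abel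

end IsCompletelyPositive

section MultiplicativeDomain

variable {A B : Type*} [Ring A] [StarRing A] [Algebra ℂ A] [StarModule ℂ A]
  [Ring B] [StarRing B] [Algebra ℂ B] [StarModule ℂ B]

def LinearMap.multiplicativityDefect (Θ : A →ₗ[ℂ] B) : A →ₗ⋆[ℂ] A →ₗ[ℂ] B :=
  .mk₂'ₛₗ (starRingEnd ℂ) (.id ℂ) (fun a b ↦ Θ (star a * b) - star (Θ a) * Θ b)
    (fun a a' b ↦ by simp only [star_add, add_mul, map_add]; abel)
    (fun c a b ↦ by simp only [star_smul, smul_mul_assoc, map_smul, smul_sub]; rfl)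
    (fun a b b' ↦ by simp only [mul_add, map_add]; abel)
    (fun c a b ↦ by simp only [mul_smul_comm, map_smul, smul_sub, RingHom.id_apply])

theorem LinearMap.map_mul_of_map_star_mul_self (Θ : A →ₗ[ℂ] B)
    (hstar : ∀ a, Θ (star a) = star (Θ a)) (h : ∀ a, Θ (star a * a) = star (Θ a) * Θ a)
    (a b : A) : Θ (a * b) = Θ a * Θ b := by
  have hD := Θ.multiplicativityDefect.eq_zero_of_forall_apply_self_eq_zero
    fun a ↦ sub_eq_zero.mpr (h a)
  have := sub_eq_zero.mp (LinearMap.congr_fun₂ hD (star a) b)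
  simpa [hstar] using this

end MultiplicativeDomain

theorem eq_zero_of_nonneg_of_map_eq_zero {A : Type*} [CStarAlgebra A] [PartialOrder A]
    [StarOrderedRing A] {φ : A →ₗ[ℂ] ℂ} (hφ : ∀ a : A, φ (star a * a) = 0 → a = 0) {x : A}
    (hx : 0 ≤ x) (hφx : φ x = 0) : x = 0 := by
  obtain ⟨s, rfl⟩ := CStarAlgebra.nonneg_iff_eq_star_mul_self.mp hx
  simp [hφ s hφx]

theorem statement12_general {A : Type*} [NormedRing A] [StarRing A] [CStarRing A]
    [PartialOrder A] [StarOrderedRing A] [NormedAlgebra ℂ A] [StarModule ℂ A]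
    [CompleteSpace A]
    (φ : A →ₗ[ℂ] ℂ)
    (hφfaithful : ∀ a : A, φ (star a * a) = 0 → a = 0)
    (Φ : A →ₗ[ℂ] A) (hΦ1 : Φ 1 = 1) (hΦcp : IsCompletelyPositive Φ)
    (hinv : ∀ a, φ (Φ a) = φ a)
    (Ψ : A →ₗ[ℂ] A) (hΨ1 : Ψ 1 = 1) (hΨcp : IsCompletelyPositive Ψ)
    (hΦΨ : ∀ a : A, Φ (Ψ a) = a) :
    (∀ a b : A, Ψ (a * b) = Ψ a * Ψ b) ∧ ∀ a : A, Ψ (star a) = star (Ψ a) := by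
  -- bundling the instances gives the functional calculus (square roots, `SelfAdjointDecompose`)
  let _ : CStarAlgebra A := {}
  have hΨstar := hΨcp.map_star
  refine ⟨Ψ.map_mul_of_map_star_mul_self hΨstar fun a ↦ ?_, hΨstar⟩
  set x := Ψ (star a * a) - star (Ψ a) * Ψ a
  have hx : 0 ≤ x := sub_nonneg.mpr (hΨcp.star_map_mul_map_le hΨ1 a)
  have hΦx : Φ x = 0 := by
    refine le_antisymm ?_ (hΦcp.map_nonneg hx)
    simpa [x, hΦΨ] using hΦcp.star_map_mul_map_le hΦ1 (Ψ a)
  have hφx : φ x = 0 := by rw [← hinv, hΦx, map_zero]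
  exact sub_eq_zero.mp (eq_zero_of_nonneg_of_map_eq_zero hφfaithful hx hφx)

/-- if `(A, Φ, φ)` is a C*-dynamical system with `φ` a faithful state and
`Ψ` is a unital completely positive right inverse of `Φ`, then `Ψ` is a *-homomorphism:
`Ψ(ab) = Ψ(a)Ψ(b)` and `Ψ(a*) = Ψ(a)*`. -/
theorem statement12 {A : Type*} [NormedRing A] [StarRing A] [CStarRing A]
    [PartialOrder A] [StarOrderedRing A] [NormedAlgebra ℂ A] [StarModule ℂ A]
    [CompleteSpace A]
    (φ : A →ₗ[ℂ] ℂ) (hφ1 : φ 1 = 1) (hφpos : ∀ a : A, 0 ≤ φ (star a * a))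
    (hφfaithful : ∀ a : A, φ (star a * a) = 0 → a = 0)
    (Φ : A →ₗ[ℂ] A) (hΦ1 : Φ 1 = 1) (hΦcp : IsCompletelyPositive Φ)
    (hinv : ∀ a, φ (Φ a) = φ a)
    (Ψ : A →ₗ[ℂ] A) (hΨ1 : Ψ 1 = 1) (hΨcp : IsCompletelyPositive Ψ)
    (hΦΨ : ∀ a : A, Φ (Ψ a) = a) :
    (∀ a b : A, Ψ (a * b) = Ψ a * Ψ b) ∧ ∀ a : A, Ψ (star a) = star (Ψ a) :=
  statement12_general φ hφfaithful Φ hΦ1 hΦcp hinv Ψ hΨ1 hΨcp hΦΨ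
end
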